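/- Let d ≥ 2 and let G ≤ Aut(T_d) be a weakly branch group acting on the boundary X = ∂T_d with the uniform Bernoulli measure μ. Then for every finite word v there exists g ∈ G such that supp(g) ⊆ X_v and μ(supp(g)) ≥ (1/d)·μ(X_v). -/

import Mathlib

open MeasureTheory
open scoped symmDiff ENNReal Pointwise

/-- Vertices of the `d`-regular rooted tree: finite words over the alphabet `Fin d`. -/
abbrev Word (d : ℕ) := List (Fin d)

/-- A permutation of the vertex set is a tree automorphism if it preserves word length and the
prefix relation. -/
def IsTreeAut {d : ℕ} (g : Equiv.Perm (Word d)) : Prop :=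
  (∀ v : Word d, (g v).length = v.length) ∧
  ∀ v w : Word d, v <+: w ↔ g v <+: g w

/-- The boundary of the `d`-regular rooted tree: infinite sequences over `Fin d`. -/
abbrev Boundary (d : ℕ) := ℕ → Fin d

/-- The length-`n` prefix of a boundary point, as a word. -/
def prefixWord {d : ℕ} (x : Boundary d) (n : ℕ) : Word d := List.ofFn fun i : Fin n => x i

/-- `act` realizes the boundary action of the tree automorphisms in `G`: for `g ∈ G`, the
length-`n` prefix of `act g x` is `g` applied to the length-`n` prefix of `x`, for every `n`. -/
def IsBoundaryAction {d : ℕ} (G : Subgroup (Equiv.Perm (Word d)))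
    (act : Equiv.Perm (Word d) → Boundary d → Boundary d) : Prop :=
  ∀ g ∈ G, ∀ (x : Boundary d) (n : ℕ), prefixWord (act g x) n = g (prefixWord x n)

/-- The cylinder of all boundary points having the word `v` as a prefix. -/
def cylinder {d : ℕ} (v : Word d) : Set (Boundary d) :=
  {x : Boundary d | prefixWord x v.length = v}

/-- The uniform Bernoulli measure: every cylinder on a word of length `n` has measure `d⁻ⁿ`. -/
def IsUniformBernoulli {d : ℕ} (μ : Measure (Boundary d)) : Prop :=
  ∀ v : Word d, μ (cylinder v) = ((d : ℝ≥0∞)⁻¹) ^ v.length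

/-- `G` acts transitively on the words of each fixed length. -/
def LevelTransitive {d : ℕ} (G : Subgroup (Equiv.Perm (Word d))) : Prop :=
  ∀ v w : Word d, v.length = w.length → ∃ g ∈ G, g v = w

/-- The rigid stabilizer of the word `v`: elements of `G` fixing every word that does not have
`v` as a prefix. -/
def ristSet {d : ℕ} (G : Subgroup (Equiv.Perm (Word d))) (v : Word d) :
    Set (Equiv.Perm (Word d)) :=
  {g : Equiv.Perm (Word d) | g ∈ G ∧ ∀ w : Word d, ¬ v <+: w → g w = w}

/-- `G` is weakly branch: level transitive with all rigid stabilizers nontrivial. -/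
def IsWeaklyBranch {d : ℕ} (G : Subgroup (Equiv.Perm (Word d))) : Prop :=
  LevelTransitive G ∧ ∀ v : Word d, ∃ g ∈ ristSet G v, g ≠ 1

/-- The rigid stabilizer of level `k`: the subgroup generated by the rigid stabilizers of all
words of length `k`. -/
def ristLevel {d : ℕ} (G : Subgroup (Equiv.Perm (Word d))) (k : ℕ) :
    Subgroup (Equiv.Perm (Word d)) :=
  Subgroup.closure (⋃ v ∈ {v : Word d | v.length = k}, ristSet G v)

/-- `G` is branch: level transitive with all level rigid stabilizers of finite index in `G`. -/
def IsBranch {d : ℕ} (G : Subgroup (Equiv.Perm (Word d))) : Prop :=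
  LevelTransitive G ∧ ∀ k : ℕ, (ristLevel G k).relIndex G ≠ 0

/-- The fixed-point set of `g` on the boundary, relative to the boundary action `act`. -/
def fixedSet {d : ℕ} (act : Equiv.Perm (Word d) → Boundary d → Boundary d)
    (g : Equiv.Perm (Word d)) : Set (Boundary d) :=
  {x : Boundary d | act g x = x}

/-- The support of `g` on the boundary: points moved by `g`. -/
def suppSet {d : ℕ} (act : Equiv.Perm (Word d) → Boundary d → Boundary d)
    (g : Equiv.Perm (Word d)) : Set (Boundary d) :=
  {x : Boundary d | act g x ≠ x}

/-! A nontrivial element of `rist_G(v)` has a lowest moved vertex: it fixes the tree up to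
some level `m ≥ |v|` and moves a child of a vertex `u ⊇ v` at level `m`. Level transitivity
conjugates it into elements `h_p ∈ rist_G(v)`, fixing level `m` and moving a child of `p`, for
each of the `d ^ (m - |v|)` vertices `p ⊇ v` at level `m`. Of two ordered products of some
of the `h_p` differing only in the factor `h_p`, one moves a child of `p`, so averaging over
all subfamilies yields a product `g` that moves a child of at least half of these `p`. Each
such `p` contributes two moved cylinders of measure `d ^ -(m + 1)`, so
`μ(supp g) ≥ d ^ (m - |v|) · d ^ -(m + 1) = μ(X_v) / d`. -/

open Function
open scoped Finset

section Cylinders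
variable {d : ℕ}

lemma length_prefixWord (x : Boundary d) (n : ℕ) : (prefixWord x n).length = n := by
  simp [prefixWord]

lemma prefixWord_eq_take (x : Boundary d) {m n : ℕ} (h : m ≤ n) :
    prefixWord x m = (prefixWord x n).take m := by
  apply List.ext_getElem <;> simp [prefixWord, h]

lemma eq_of_forall_prefixWord_eq {x y : Boundary d}
    (h : ∀ n, prefixWord x n = prefixWord y n) : x = y := by
  funext i
  simpa [prefixWord] using congrFun (List.ofFn_inj.mp (h (i + 1))) (Fin.last i)

lemma mem_cylinder_iff {x : Boundary d} {w : Word d} :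
    x ∈ cylinder w ↔ prefixWord x w.length = w :=
  Iff.rfl

lemma mem_cylinder_prefixWord (x : Boundary d) (n : ℕ) : x ∈ cylinder (prefixWord x n) := by
  rw [mem_cylinder_iff, length_prefixWord]

lemma cylinder_subset_cylinder {w y : Word d} (h : w <+: y) : cylinder y ⊆ cylinder w := by
  intro x (hx : prefixWord x y.length = y)
  change prefixWord x w.length = w
  rw [prefixWord_eq_take x h.length_le, hx, ← List.prefix_iff_eq_take.mp h]

lemma disjoint_cylinder {w y : Word d} (hl : w.length = y.length) (hne : w ≠ y) :
    Disjoint (cylinder w) (cylinder y) :=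
  Set.disjoint_left.mpr fun x (hw : prefixWord x w.length = w) (hy : prefixWord x y.length = y) =>
    hne (hw.symm.trans (hl ▸ hy))

lemma measurableSet_cylinder (w : Word d) : MeasurableSet (cylinder w) :=
  (Set.to_countable {t : Fin w.length → Fin d | List.ofFn t = w}).measurableSet.preimage
    (measurable_pi_lambda _ fun i => measurable_pi_apply (i : ℕ))

end Cylinders

lemma List.IsPrefix.eq_of_common_extension {α : Type*} {l₁ l₂ l : List α} (h₁ : l₁ <+: l)
    (h₂ : l₂ <+: l) (hl : l₁.length = l₂.length) : l₁ = l₂ :=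
  (List.prefix_of_prefix_length_le h₁ h₂ hl.le).eq_of_length hl

section TreeAut
variable {d : ℕ} {g : Equiv.Perm (Word d)}

lemma IsTreeAut.apply_eq_of_isPrefix (hg : IsTreeAut g) {v w : Word d} (hvw : v <+: w)
    (hv : v <+: g w) : g v = v :=
  ((hg.2 v w).mp hvw).eq_of_common_extension hv (hg.1 v)

lemma IsTreeAut.exists_apply_append_singleton (hg : IsTreeAut g) {p : Word d} (hp : g p = p)
    (c : Fin d) : ∃ c', g (p ++ [c]) = p ++ [c'] := by
  obtain ⟨r, hr⟩ : p <+: g (p ++ [c]) := by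
    simpa only [hp] using (hg.2 p (p ++ [c])).mp (List.prefix_append _ _)
  have hlen : r.length = 1 := by
    simpa [← hr] using hg.1 (p ++ [c])
  obtain ⟨c', rfl⟩ := List.length_eq_one_iff.mp hlen
  exact ⟨c', hr.symm⟩

lemma IsTreeAut.exists_apply_append_singleton_eq (hg : IsTreeAut g) {p : Word d}
    (hp : g p = p) (c : Fin d) : ∃ c', g (p ++ [c']) = p ++ [c] := by
  choose σ hσ using hg.exists_apply_append_singleton hp
  have hσinj : Injective σ := fun c₁ c₂ h => by
    have := g.injective ((hσ c₁).trans (h ▸ (hσ c₂).symm))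
    simpa using List.append_cancel_left this
  obtain ⟨c', rfl⟩ := (Finite.injective_iff_surjective.mp hσinj) c
  exact ⟨c', hσ c'⟩

end TreeAut

section MovesChild
variable {d : ℕ}

def MovesChild (g : Equiv.Perm (Word d)) (p : Word d) : Prop :=
  ∃ c : Fin d, g (p ++ [c]) ≠ p ++ [c]

instance (g : Equiv.Perm (Word d)) (p : Word d) : Decidable (MovesChild g p) :=
  inferInstanceAs (Decidable (∃ c : Fin d, g (p ++ [c]) ≠ p ++ [c]))

-- `B` permutes the children of `p`, so if `A * B` and `A * x * B` both fixed them, `x` would too.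
lemma movesChild_mul_or_movesChild_mul_mul (A : Equiv.Perm (Word d)) {x B : Equiv.Perm (Word d)}
    {p : Word d} (hB : IsTreeAut B) (hBp : B p = p) (hx : MovesChild x p) :
    MovesChild (A * B) p ∨ MovesChild (A * x * B) p := by
  by_contra! hfix
  simp only [MovesChild, not_exists, not_not] at hfix
  obtain ⟨a, ha⟩ := hx
  obtain ⟨c, hc⟩ := hB.exists_apply_append_singleton_eq hBp a
  have h₁ : A (p ++ [a]) = p ++ [c] := by
    simpa [hc] using hfix.1 c
  have h₂ : A (x (p ++ [a])) = p ++ [c] := by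
    simpa [hc] using hfix.2 c
  exact ha (A.injective (h₂.trans h₁.symm))

end MovesChild

section Stabilizers
variable {d : ℕ} {G : Subgroup (Equiv.Perm (Word d))} {f g : Equiv.Perm (Word d)}

def levelStabilizer (d m : ℕ) : Subgroup (Equiv.Perm (Word d)) :=
  ⨅ (w : Word d) (_ : w.length ≤ m), MulAction.stabilizer _ w

lemma mem_levelStabilizer {m : ℕ} :
    g ∈ levelStabilizer d m ↔ ∀ w : Word d, w.length ≤ m → g w = w := by
  simp [levelStabilizer, Subgroup.mem_iInf, Equiv.Perm.smul_def]

lemma conj_mem_levelStabilizer {m : ℕ} (hf : IsTreeAut f) (hg : g ∈ levelStabilizer d m) :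
    f * g * f⁻¹ ∈ levelStabilizer d m := by
  rw [mem_levelStabilizer] at hg ⊢
  intro w hw
  have hlen : (f⁻¹ w).length = w.length := by
    rw [← hf.1 (f⁻¹ w), Equiv.Perm.inv_def, Equiv.apply_symm_apply]
  rw [Equiv.Perm.mul_apply, Equiv.Perm.mul_apply, hg _ (hlen ▸ hw), Equiv.Perm.inv_def,
    Equiv.apply_symm_apply]

lemma exists_movesChild_of_mem_levelStabilizer {n : ℕ} (hg : g ∈ levelStabilizer d n)
    (hg1 : g ≠ 1) :
    ∃ m, n ≤ m ∧ g ∈ levelStabilizer d m ∧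
      ∃ u : Word d, u.length = m ∧ MovesChild g u := by
  classical
  have hex : ∃ k, ∃ w : Word d, w.length = k ∧ g w ≠ w := by
    by_contra! h
    exact hg1 (Equiv.ext fun w => h _ w rfl)
  obtain ⟨w, hwlen, hw⟩ := Nat.find_spec hex
  have hn : n < Nat.find hex := by
    by_contra! h
    exact hw (mem_levelStabilizer.mp hg w (hwlen ▸ h))
  have hmin : g ∈ levelStabilizer d (Nat.find hex - 1) := by
    rw [mem_levelStabilizer]
    intro w' hw'
    by_contra h
    exact Nat.find_min hex (by omega : w'.length < Nat.find hex) ⟨w', rfl, h⟩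
  have hwne : w ≠ [] := by rintro rfl; simp only [List.length_nil] at hwlen; omega
  refine ⟨_, by omega, hmin, w.dropLast, by simp [hwlen], w.getLast hwne, ?_⟩
  rwa [List.dropLast_append_getLast]

def rist (G : Subgroup (Equiv.Perm (Word d))) (v : Word d) : Subgroup (Equiv.Perm (Word d)) where
  carrier := ristSet G v
  mul_mem' ha hb := ⟨G.mul_mem ha.1 hb.1, fun w hw => by simp [hb.2 w hw, ha.2 w hw]⟩
  one_mem' := ⟨G.one_mem, fun _ _ => rfl⟩
  inv_mem' ha := ⟨G.inv_mem ha.1, fun w hw => Equiv.Perm.inv_eq_iff_eq.mpr (ha.2 w hw).symm⟩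

lemma rist_le (G : Subgroup (Equiv.Perm (Word d))) (v : Word d) : rist G v ≤ G :=
  fun _ hg => hg.1

lemma isPrefix_of_mem_rist {v w : Word d} (hg : g ∈ rist G v) (hw : g w ≠ w) : v <+: w := by
  by_contra h
  exact hw (hg.2 w h)

lemma mem_levelStabilizer_of_mem_rist {v : Word d} (hgt : IsTreeAut g) (hg : g ∈ rist G v) :
    g ∈ levelStabilizer d v.length := by
  rw [mem_levelStabilizer]
  intro w hw
  by_contra hmoved
  have hgw : g (g w) ≠ g w := fun h => hmoved (g.injective h)
  have h₁ := isPrefix_of_mem_rist hg hmoved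
  have h₂ := isPrefix_of_mem_rist hg hgw
  have hlen : v.length = w.length := le_antisymm h₁.length_le hw
  exact hmoved ((h₂.eq_of_length (by rw [hgt.1, hlen])).symm.trans (h₁.eq_of_length hlen))

lemma conj_mem_rist {v : Word d} (hf : f ∈ G) (hft : IsTreeAut f) (hg : g ∈ rist G v) :
    f * g * f⁻¹ ∈ rist G (f v) := by
  refine ⟨G.mul_mem (G.mul_mem hf hg.1) (G.inv_mem hf), fun w hw => ?_⟩
  have hw' : ¬ v <+: f⁻¹ w := fun h => hw (by simpa using (hft.2 v (f⁻¹ w)).mp h)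
  rw [Equiv.Perm.mul_apply, Equiv.Perm.mul_apply, hg.2 _ hw', Equiv.Perm.inv_def,
    Equiv.apply_symm_apply]

end Stabilizers

lemma IsWeaklyBranch.exists_movesChild_family {d : ℕ} {G : Subgroup (Equiv.Perm (Word d))}
    (hG : ∀ g ∈ G, IsTreeAut g) (hWB : IsWeaklyBranch G) (v : Word d) :
    ∃ (k : ℕ) (h : (Fin k → Fin d) → Equiv.Perm (Word d)), ∀ t,
      h t ∈ rist G v ⊓ levelStabilizer d (v.length + k) ∧
        MovesChild (h t) (v ++ List.ofFn t) := by
  obtain ⟨g, hg, hg1⟩ := hWB.2 v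
  have hgt : IsTreeAut g := hG g hg.1
  obtain ⟨m, hvm, hgm, u, rfl, a, ha⟩ :=
    exists_movesChild_of_mem_levelStabilizer (mem_levelStabilizer_of_mem_rist (G := G) hgt hg) hg1
  have hvu : v <+: u :=
    List.prefix_of_prefix_length_le (isPrefix_of_mem_rist hg ha) (List.prefix_append _ _) hvm
  obtain ⟨k, hk⟩ := Nat.exists_eq_add_of_le hvm
  have hconj (t : Fin k → Fin d) :
      ∃ f ∈ G, f (u ++ [a]) = v ++ List.ofFn t ++ [a] := hWB.1 _ _ (by simp [hk]; omega)
  choose f hfG hf using hconj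
  refine ⟨k, fun t => f t * g * (f t)⁻¹, fun t => ⟨⟨?_, ?_⟩, a, ?_⟩⟩
  · have hfv : f t v = v :=
      (hG _ (hfG t)).apply_eq_of_isPrefix (hvu.trans (List.prefix_append _ _))
      (by rw [hf t, List.append_assoc]; exact List.prefix_append _ _)
    simpa [hfv] using conj_mem_rist (hfG t) (hG _ (hfG t)) hg
  · exact hk ▸ conj_mem_levelStabilizer (hG _ (hfG t)) hgm
  · rw [← hf t]
    simpa using ha

section SelectProd
variable {ι M : Type*} [Monoid M]

def selectProd (L : List ι) (f : ι → M) (ε : ι → Bool) : M :=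
  (L.map fun i => if ε i then f i else 1).prod

lemma selectProd_mem {S : Submonoid M} {f : ι → M} (hf : ∀ i, f i ∈ S) (L : List ι)
    (ε : ι → Bool) : selectProd L f ε ∈ S :=
  S.list_prod_mem fun _ hx => by
    obtain ⟨i, -, rfl⟩ := List.mem_map.mp hx
    split <;> simp [hf i, S.one_mem]

lemma exists_selectProd_update [DecidableEq ι] {L : List ι} (hL : L.Nodup) {t : ι} (ht : t ∈ L)
    (f : ι → M) (ε : ι → Bool) :
    ∃ (A : M) (L₂ : List ι), ∀ b : Bool,
      selectProd L f (update ε t b) = A * (if b then f t else 1) * selectProd L₂ f ε := by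
  obtain ⟨L₁, L₂, rfl⟩ := List.append_of_mem ht
  have hL₁ : t ∉ L₁ := fun h => List.disjoint_of_nodup_append hL h List.mem_cons_self
  have hL₂ : t ∉ L₂ := (List.nodup_cons.mp hL.of_append_right).1
  have hmap {L' : List ι} (hL' : t ∉ L') (b : Bool) :
      selectProd L' f (update ε t b) = selectProd L' f ε := by
    refine congrArg List.prod (List.map_congr_left fun i hi => ?_)
    rw [update_of_ne (ne_of_mem_of_not_mem hi hL')]
  refine ⟨selectProd L₁ f ε, L₂, fun b => ?_⟩
  rw [← hmap hL₁ b, ← hmap hL₂ b]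
  simp [selectProd, mul_assoc]

end SelectProd

-- `σ i` injects the `ω` failing `good · i` into those satisfying it; double counting concludes.
lemma exists_card_le_two_mul_card_filter {Ω ι : Type*} [Fintype Ω] [Nonempty Ω] [Fintype ι]
    (good : Ω → ι → Prop) [∀ ω i, Decidable (good ω i)] (σ : ι → Ω → Ω)
    (hσ : ∀ i, Injective (σ i)) (h : ∀ ω i, good ω i ∨ good (σ i ω) i) :
    ∃ ω, Fintype.card ι ≤ 2 * #{i | good ω i} := by
  have hhalf (i : ι) : Fintype.card Ω ≤ 2 * #{ω | good ω i} := by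
    have hbad : #{ω | ¬ good ω i} ≤ #{ω | good ω i} :=
      Finset.card_le_card_of_injOn (σ i)
        (fun ω hω => by simpa using (h ω i).resolve_left (by simpa using hω)) (hσ i).injOn
    have := Finset.card_filter_add_card_filter_not (s := Finset.univ) (fun ω => good ω i)
    rw [Finset.card_univ] at this
    omega
  have hsum : ∑ _ω : Ω, Fintype.card ι ≤ ∑ ω, 2 * #{i | good ω i} := by
    calc ∑ _ω : Ω, Fintype.card ι = ∑ _i : ι, Fintype.card Ω := by simp [mul_comm]
      _ ≤ ∑ i, 2 * #{ω | good ω i} := Finset.sum_le_sum fun i _ => hhalf i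
      _ = ∑ ω, 2 * #{i | good ω i} := by
        simp only [← Finset.mul_sum, Finset.card_filter]
        rw [Finset.sum_comm]
  obtain ⟨ω, -, hω⟩ := Finset.exists_le_of_sum_le Finset.univ_nonempty hsum
  exact ⟨ω, hω⟩

-- Of two products of some of the `h i` differing only in the factor `h i`, one moves a child of
-- `p i`; then average over all such products.
lemma exists_mem_card_le_two_mul_card_movesChild {d : ℕ} {ι : Type*} [Fintype ι]
    [DecidableEq ι] (H : Subgroup (Equiv.Perm (Word d))) {p : ι → Word d}
    (hH : ∀ g ∈ H, IsTreeAut g ∧ ∀ i, g (p i) = p i) {h : ι → Equiv.Perm (Word d)}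
    (hh : ∀ i, h i ∈ H) (hmov : ∀ i, MovesChild (h i) (p i)) :
    ∃ g ∈ H, Fintype.card ι ≤ 2 * #{i | MovesChild g (p i)} := by
  set L := (Finset.univ : Finset ι).toList
  have htoggle (ε : ι → Bool) (i : ι) : MovesChild (selectProd L h ε) (p i) ∨
      MovesChild (selectProd L h (update ε i (!ε i))) (p i) := by
    obtain ⟨A, L₂, hA⟩ := exists_selectProd_update (Finset.nodup_toList _)
      (Finset.mem_toList.mpr (Finset.mem_univ i)) h ε
    obtain ⟨hBt, hBp⟩ := hH _ (selectProd_mem (S := H.toSubmonoid) hh L₂ ε)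
    have := movesChild_mul_or_movesChild_mul_mul A hBt (hBp i) (hmov i)
    conv_lhs => rw [← update_eq_self i ε]
    rw [hA, hA]
    cases ε i <;> simpa [or_comm] using this
  have hinj (i : ι) : Injective fun ε : ι → Bool => update ε i (!ε i) :=
    Involutive.injective fun ε => by simp
  obtain ⟨ε, hε⟩ := exists_card_le_two_mul_card_filter _ _ hinj htoggle
  exact ⟨_, selectProd_mem (S := H.toSubmonoid) hh L ε, hε⟩

section Measure
variable {d : ℕ} {G : Subgroup (Equiv.Perm (Word d))}
  {act : Equiv.Perm (Word d) → Boundary d → Boundary d} {g : Equiv.Perm (Word d)}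

lemma suppSet_eq_iUnion_cylinder (hact : IsBoundaryAction G act) (hg : g ∈ G) :
    suppSet act g = ⋃ (w : Word d) (_ : g w ≠ w), cylinder w := by
  ext x
  simp only [suppSet, Set.mem_ofPred_eq, Set.mem_iUnion, exists_prop]
  constructor
  · intro hx
    obtain ⟨n, hn⟩ : ∃ n, prefixWord (act g x) n ≠ prefixWord x n := by
      by_contra! h
      exact hx (eq_of_forall_prefixWord_eq h)
    exact ⟨prefixWord x n, hact g hg x n ▸ hn, mem_cylinder_prefixWord x n⟩
  · rintro ⟨w, hw, hx⟩ hfix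
    have := hact g hg x w.length
    rw [hfix, mem_cylinder_iff.mp hx] at this
    exact hw this.symm

lemma measurableSet_suppSet (hact : IsBoundaryAction G act) (hg : g ∈ G) :
    MeasurableSet (suppSet act g) := by
  rw [suppSet_eq_iUnion_cylinder hact hg]
  exact MeasurableSet.iUnion fun w => MeasurableSet.iUnion fun _ => measurableSet_cylinder w

lemma suppSet_subset_cylinder (hact : IsBoundaryAction G act) {v : Word d} (hg : g ∈ rist G v) :
    suppSet act g ⊆ cylinder v := by
  rw [suppSet_eq_iUnion_cylinder hact (rist_le G v hg)]
  exact Set.iUnion₂_subset fun w hw => cylinder_subset_cylinder (isPrefix_of_mem_rist hg hw)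

-- A moved child `y` of `p` and its image `g y ≠ y` are two moved vertices at level `|p| + 1`.
lemma two_mul_le_measure_suppSet_inter_cylinder (hact : IsBoundaryAction G act)
    {μ : Measure (Boundary d)} (hμ : IsUniformBernoulli μ) (hg : g ∈ G) (hgt : IsTreeAut g)
    {p : Word d} (hp : g p = p) (hmov : MovesChild g p) :
    2 * (d : ℝ≥0∞)⁻¹ ^ (p.length + 1) ≤ μ (suppSet act g ∩ cylinder p) := by
  obtain ⟨c, hc⟩ := hmov
  obtain ⟨c', hc'⟩ := hgt.exists_apply_append_singleton hp c
  have hne : p ++ [c] ≠ p ++ [c'] := fun h => hc (hc'.trans h.symm)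
  have hc'moved : g (p ++ [c']) ≠ p ++ [c'] := fun h => hne (g.injective (hc'.trans h.symm))
  have hsub (e : Fin d) (he : g (p ++ [e]) ≠ p ++ [e]) :
      cylinder (p ++ [e]) ⊆ suppSet act g ∩ cylinder p := by
    rw [suppSet_eq_iUnion_cylinder hact hg]
    exact Set.subset_inter (Set.subset_biUnion_of_mem (u := cylinder) he)
      (cylinder_subset_cylinder (List.prefix_append _ _))
  calc 2 * (d : ℝ≥0∞)⁻¹ ^ (p.length + 1)
      = μ (cylinder (p ++ [c]) ∪ cylinder (p ++ [c'])) := by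
        rw [measure_union (disjoint_cylinder (by simp) hne) (measurableSet_cylinder _), hμ, hμ]
        simp [two_mul]
    _ ≤ μ (suppSet act g ∩ cylinder p) :=
        measure_mono (Set.union_subset (hsub c hc) (hsub c' hc'moved))

lemma sum_measure_inter_cylinder_le {ι : Type*} (μ : Measure (Boundary d)) {s : Set (Boundary d)}
    (hs : MeasurableSet s) {p : ι → Word d} (hp : Injective p)
    (hlen : ∀ i j, (p i).length = (p j).length) (I : Finset ι) :
    ∑ i ∈ I, μ (s ∩ cylinder (p i)) ≤ μ s := by
  rw [← measure_biUnion_finset (fun i _ j _ hij => ?_)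
    fun i _ => hs.inter (measurableSet_cylinder _)]
  · exact measure_mono (Set.iUnion₂_subset fun i _ => Set.inter_subset_left)
  · exact (disjoint_cylinder (hlen i j) (hp.ne hij)).mono
      Set.inter_subset_right Set.inter_subset_right

lemma two_mul_card_mul_le_measure_suppSet (hact : IsBoundaryAction G act)
    {μ : Measure (Boundary d)} (hμ : IsUniformBernoulli μ) (hg : g ∈ G) (hgt : IsTreeAut g)
    {ι : Type*} [Fintype ι] {p : ι → Word d} (hp : Injective p) {m : ℕ}
    (hlen : ∀ i, (p i).length = m) (hfix : ∀ i, g (p i) = p i) :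
    2 * #{i | MovesChild g (p i)} * (d : ℝ≥0∞)⁻¹ ^ (m + 1) ≤ μ (suppSet act g) :=
  calc 2 * #{i | MovesChild g (p i)} * (d : ℝ≥0∞)⁻¹ ^ (m + 1)
      = ∑ i with MovesChild g (p i), 2 * (d : ℝ≥0∞)⁻¹ ^ (m + 1) := by
        rw [Finset.sum_const, nsmul_eq_mul]
        ring
    _ ≤ ∑ i with MovesChild g (p i), μ (suppSet act g ∩ cylinder (p i)) :=
        Finset.sum_le_sum fun i hi => hlen i ▸
          two_mul_le_measure_suppSet_inter_cylinder hact hμ hg hgt (hfix i)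
            (Finset.mem_filter.mp hi).2
    _ ≤ μ (suppSet act g) :=
        sum_measure_inter_cylinder_le μ (measurableSet_suppSet hact hg) hp
          (fun i j => (hlen i).trans (hlen j).symm) _

end Measure

theorem exists_support_in_cylinder_of_weaklyBranch_general
    {d : ℕ} (G : Subgroup (Equiv.Perm (Word d)))
    (hG : ∀ g ∈ G, IsTreeAut g) (hWB : IsWeaklyBranch G)
    (act : Equiv.Perm (Word d) → Boundary d → Boundary d) (hact : IsBoundaryAction G act)
    (μ : Measure (Boundary d)) (hμ : IsUniformBernoulli μ)
    (v : Word d) :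
    ∃ g ∈ G, suppSet act g ⊆ cylinder v ∧
      (d : ℝ≥0∞)⁻¹ * μ (cylinder v) ≤ μ (suppSet act g) := by
  have hd0 : (d : ℝ≥0∞) ≠ 0 := by
    rintro h
    obtain rfl : d = 0 := by exact_mod_cast h
    simpa [Set.eq_empty_of_isEmpty (cylinder [])] using hμ []
  obtain ⟨k, h, hh⟩ := hWB.exists_movesChild_family hG v
  set H := rist G v ⊓ levelStabilizer d (v.length + k)
  have hH : ∀ g ∈ H,
      IsTreeAut g ∧ ∀ t : Fin k → Fin d, g (v ++ List.ofFn t) = v ++ List.ofFn t :=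
    fun g hg => ⟨hG g (rist_le G v (Subgroup.mem_inf.mp hg).1),
      fun t => mem_levelStabilizer.mp (Subgroup.mem_inf.mp hg).2 _ (by simp)⟩
  obtain ⟨g, hgH, hcard⟩ :=
    exists_mem_card_le_two_mul_card_movesChild H hH (fun t => (hh t).1) (fun t => (hh t).2)
  have hgv : g ∈ rist G v := (Subgroup.mem_inf.mp hgH).1
  have hp : Injective fun t : Fin k → Fin d => v ++ List.ofFn t :=
    fun t t' htt' => List.ofFn_injective (List.append_cancel_left htt')
  refine ⟨g, rist_le G v hgv, suppSet_subset_cylinder hact hgv, ?_⟩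
  calc (d : ℝ≥0∞)⁻¹ * μ (cylinder v)
      = (d : ℝ≥0∞) ^ k * (d : ℝ≥0∞)⁻¹ ^ (v.length + k + 1) := by
        rw [hμ, ← pow_succ', add_right_comm, add_comm _ k, pow_add _ k, ← mul_assoc,
          ← mul_pow, ENNReal.mul_inv_cancel hd0 (ENNReal.natCast_ne_top d), one_pow, one_mul]
    _ ≤ 2 * #{t | MovesChild g (v ++ List.ofFn t)} *
          (d : ℝ≥0∞)⁻¹ ^ (v.length + k + 1) := by
        gcongr
        exact_mod_cast (by simpa using hcard)
    _ ≤ μ (suppSet act g) :=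
        two_mul_card_mul_le_measure_suppSet hact hμ (rist_le G v hgv) (hH g hgH).1 hp
          (fun t => by simp) (hH g hgH).2

/-- For a weakly branch group `G` on the `d`-regular rooted tree and any vertex `v`, there is
`g ∈ G` supported inside the cylinder `X_v` and moving at least a `1/d` fraction of it. -/
theorem exists_support_in_cylinder_of_weaklyBranch
    {d : ℕ} (hd : 2 ≤ d) (G : Subgroup (Equiv.Perm (Word d)))
    (hG : ∀ g ∈ G, IsTreeAut g) (hWB : IsWeaklyBranch G)
    (act : Equiv.Perm (Word d) → Boundary d → Boundary d) (hact : IsBoundaryAction G act)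
    (μ : Measure (Boundary d)) [IsProbabilityMeasure μ] (hμ : IsUniformBernoulli μ)
    (v : Word d) :
    ∃ g ∈ G, suppSet act g ⊆ cylinder v ∧
      (d : ℝ≥0∞)⁻¹ * μ (cylinder v) ≤ μ (suppSet act g) :=
  exists_support_in_cylinder_of_weaklyBranch_general G hG hWB act hact μ hμ v
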